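/- arXiv:2207.06528 — 4 statements merged into one kernel-verified Lean document; each statement's English description precedes it below -/
import Mathlib

section
/- Let (W,S) be a Coxeter system. For a word w on S, let N(w) be the set of elements of W that occur an odd number of times in the sequence (r_1(w), …, r_k(w)) of reflections of w. If two words w and w' on S represent the same element of W, then N(w) = N(w'). -/
/-!
Let `W` act on `W → ℤ/2` by conjugating the argument. In the semidirect product
`(W → ℤ/2) ⋊ W`, the elements `(δ_s, s)` for the simple reflections `s` satisfy the Coxeter
relations: the left inversion sequence of the alternating word of length `2 m` is
`s (t s)^k` for `k < 2 m`, which is periodic of period `m` since `(t s)^m = 1`, so it lists every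
entry an even number of times. The induced homomorphism
sends the product of any word `w` to `(parity of the multiplicities in the left inversion sequence
of w, product of w)`, so that parity vector depends only on the product.
-/

open List

section Parity

variable {α : Type*} [DecidableEq α]

def countParity (l : List α) : α → Multiplicative (ZMod 2) :=
  fun u => .ofAdd (l.count u : ZMod 2)

lemma countParity_nil : countParity ([] : List α) = 1 := by
  funext u; simp [countParity]

lemma countParity_cons (a : α) (l : List α) :
    countParity (a :: l) = Pi.mulSingle a (.ofAdd 1) * countParity l := by
  funext u
  by_cases hu : u = a
  · subst hu; simp [countParity, mul_comm]
  · simp [countParity, Ne.symm hu]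

lemma countParity_append_self (l : List α) : countParity (l ++ l) = 1 := by
  funext u
  simp only [countParity, count_append, Nat.cast_add, CharTwo.add_self_eq_zero]
  rfl

lemma setOf_odd_count_eq_of_countParity_eq {l l' : List α} (h : countParity l = countParity l') :
    {u | Odd (l.count u)} = {u | Odd (l'.count u)} := by
  ext u
  have hu := (ZMod.natCast_eq_natCast_iff' _ _ 2).mp (Multiplicative.ofAdd.injective (congrFun h u))
  simp only [Set.mem_ofPred_eq, Nat.odd_iff, hu]

end Parity

section Conj

variable {G : Type*} [Group G]

def conjArrow : G →* MulAut (G → Multiplicative (ZMod 2)) :=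
  mulAutArrow.comp (ConjAct.toConjAct : G ≃* ConjAct G).toMonoidHom

lemma conjArrow_apply (g : G) (f : G → Multiplicative (ZMod 2)) (u : G) :
    conjArrow g f u = f (g⁻¹ * u * g) := by
  show f ((ConjAct.toConjAct g)⁻¹ • u) = _
  rw [ConjAct.smul_def]
  simp

variable [DecidableEq G]

lemma countParity_map_conj (g : G) (l : List G) :
    countParity (l.map (MulAut.conj g)) = conjArrow g (countParity l) := by
  funext u
  obtain ⟨v, rfl⟩ := (MulAut.conj g).surjective u
  rw [conjArrow_apply, countParity, countParity,
    count_map_of_injective _ _ (MulAut.conj g).injective]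
  simp [mul_assoc]

def mulSingleMk (g : G) : (G → Multiplicative (ZMod 2)) ⋊[conjArrow] G :=
  ⟨Pi.mulSingle g (.ofAdd 1), g⟩

lemma mulSingleMk_mul_mk (g x : G) (l : List G) :
    mulSingleMk g * ⟨countParity l, x⟩ = ⟨countParity (g :: l.map (MulAut.conj g)), g * x⟩ := by
  rw [mulSingleMk, SemidirectProduct.mul_def, countParity_cons, countParity_map_conj]

end Conj

namespace CoxeterSystem

variable {B W : Type*} [Group W] {M : CoxeterMatrix B} (cs : CoxeterSystem M W)

lemma prod_map_alternatingWord_two_mul {G : Type*} [Monoid G] (f : B → G) (i j : B) (p : ℕ) :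
    ((alternatingWord i j (2 * p)).map f).prod = (f i * f j) ^ p := by
  induction p with
  | zero => simp [alternatingWord]
  | succ p ih =>
    rw [show 2 * (p + 1) = 2 * p + 1 + 1 by ring, alternatingWord_succ', alternatingWord_succ']
    simp [ih, pow_succ', mul_assoc]

lemma leftInvSeq_alternatingWord_two_mul (i j : B) (p : ℕ) :
    cs.leftInvSeq (alternatingWord i j (2 * p)) =
      (range (2 * p)).map fun k => cs.simple i * (cs.simple j * cs.simple i) ^ k := by
  refine ext_getElem (by simp) fun k hk _ => ?_
  rw [getElem_leftInvSeq_alternatingWord cs i j p k (by simpa using hk),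
    prod_alternatingWord_eq_mul_pow]
  simp [Nat.not_even_bit1, Nat.mul_add_div]

lemma leftInvSeq_alternatingWord_two_mul_self (i j : B) :
    ∃ L, cs.leftInvSeq (alternatingWord i j (2 * M i j)) = L ++ L := by
  refine ⟨(range (M i j)).map fun k => cs.simple i * (cs.simple j * cs.simple i) ^ k, ?_⟩
  rw [leftInvSeq_alternatingWord_two_mul, two_mul, range_add, map_append, map_map]
  congr 2
  funext k
  simp [pow_add, M.symmetric j i ▸ cs.simple_mul_simple_pow j i]

variable [DecidableEq W]

lemma prod_map_mulSingleMk_simple (ω : List B) :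
    (ω.map (mulSingleMk ∘ cs.simple)).prod = ⟨countParity (cs.leftInvSeq ω), cs.wordProd ω⟩ := by
  induction ω with
  | nil => simp [countParity_nil]
  | cons i ω ih =>
    rw [map_cons, prod_cons, ih, Function.comp_apply, mulSingleMk_mul_mk, leftInvSeq,
      wordProd_cons]

lemma isLiftable_mulSingleMk_simple : M.IsLiftable (mulSingleMk ∘ cs.simple) := by
  intro i j
  obtain ⟨L, hL⟩ := cs.leftInvSeq_alternatingWord_two_mul_self i j
  rw [← prod_map_alternatingWord_two_mul, prod_map_mulSingleMk_simple, hL,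
    countParity_append_self, prod_alternatingWord_eq_mul_pow]
  simp [cs.simple_mul_simple_pow]

def parityHom : W →* (W → Multiplicative (ZMod 2)) ⋊[conjArrow] W :=
  cs.lift ⟨_, cs.isLiftable_mulSingleMk_simple⟩

lemma parityHom_wordProd (ω : List B) :
    cs.parityHom (cs.wordProd ω) = ⟨countParity (cs.leftInvSeq ω), cs.wordProd ω⟩ := by
  rw [← prod_map_mulSingleMk_simple, wordProd, map_list_prod, map_map]
  congr 2
  funext i
  exact cs.lift_apply_simple _ i

lemma countParity_leftInvSeq_eq_of_wordProd_eq {ω ω' : List B}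
    (h : cs.wordProd ω = cs.wordProd ω') :
    countParity (cs.leftInvSeq ω) = countParity (cs.leftInvSeq ω') := by
  have h_left := congrArg (fun x => (cs.parityHom x).left) h
  simpa only [parityHom_wordProd] using h_left

end CoxeterSystem

/-- For a word `w` on `S`, let `N(w)` be the set of elements of `W` occurring an odd number of
times among the reflections `r_1(w), …, r_k(w)` (the left inversion sequence).  If two words
represent the same element of `W`, then `N(w) = N(w')`. -/
theorem oddReflections_eq_of_wordProd_eq {B W : Type*} [Group W] [DecidableEq W]
    {M : CoxeterMatrix B} (cs : CoxeterSystem M W) (w w' : List B)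
    (h : cs.wordProd w = cs.wordProd w') :
    {u : W | Odd ((cs.leftInvSeq w).count u)} = {u : W | Odd ((cs.leftInvSeq w').count u)} :=
  setOf_odd_count_eq_of_countParity_eq (cs.countParity_leftInvSeq_eq_of_wordProd_eq h)
end

section
/- Let (W,S) be a Coxeter system with Coxeter matrix m, let i ≠ j with m(i,j) = m finite, and consider the alternating words u = s_i s_j s_i ⋯ (m letters) and v = s_j s_i s_j ⋯ (m letters). Then for all 1 ≤ n ≤ m, the n-th reflection of u equals the (m−n+1)-st reflection of v: r_n(u) = r_{m−n+1}(v) in W. -/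
/-!
Counted from the right end, the right inversions of `alternatingWord i j m` are the palindromes
`π (alternatingWord i j (2 * p + 1))`, and each left inversion is the corresponding
right inversion conjugated by the word product. The two alternating words of length `M i j` have
the same product (braid relation), so the claim reduces to
`π (alternatingWord i j q) = π (alternatingWord j i (2 * M i j - q))`, a consequence of
`(s i * s j) ^ M i j = 1`.
-/

namespace CoxeterSystem

variable {B W : Type*} [Group W] {M : CoxeterMatrix B} (cs : CoxeterSystem M W)

local prefix:100 "s" => cs.simple
local prefix:100 "π" => cs.wordProd
local prefix:100 "lis" => cs.leftInvSeq
local prefix:100 "ris" => cs.rightInvSeq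

theorem getD_leftInvSeq_eq_conj (ω : List B) (k : ℕ) :
    (lis ω).getD k 1 = MulAut.conj (π ω) ((ris ω).getD k 1) := by
  rw [MulAut.conj_apply, eq_mul_inv_iff_mul_eq, getD_leftInvSeq_mul_wordProd,
    wordProd_mul_getD_rightInvSeq]

theorem simple_mul_wordProd_alternatingWord_mul_simple (i j : B) (p : ℕ) :
    s j * π (alternatingWord j i (2 * p + 1)) * s j =
      π (alternatingWord i j (2 * (p + 1) + 1)) := by
  have hodd : ¬ Even (2 * p + 1) := by simp [parity_simps]
  rw [show 2 * (p + 1) + 1 = 2 * p + 1 + 1 + 1 by ring, alternatingWord_succ i j,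
    alternatingWord_succ' j i (2 * p + 1), if_neg hodd, wordProd_concat, wordProd_cons]

theorem rightInvSeq_alternatingWord (i j : B) (m : ℕ) :
    ris (alternatingWord i j m) =
      ((List.range m).map fun p => π (alternatingWord i j (2 * p + 1))).reverse := by
  induction m generalizing i j with
  | zero => simp [alternatingWord]
  | succ m ih =>
    rw [alternatingWord_succ, rightInvSeq_concat, ih, List.range_succ_eq_map, List.map_cons,
      List.reverse_cons, List.map_reverse, List.map_map, List.map_map, List.concat_eq_append]
    congr 2
    · refine List.map_congr_left fun p _ => ?_
      rw [Function.comp_apply, Function.comp_apply, MulAut.conj_apply, inv_simple,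
        simple_mul_wordProd_alternatingWord_mul_simple]
    · simp [alternatingWord]

theorem getD_rightInvSeq_alternatingWord (i j : B) {m k : ℕ} (hk : k < m) :
    (ris (alternatingWord i j m)).getD k 1 =
      π (alternatingWord i j (2 * (m - 1 - k) + 1)) := by
  rw [rightInvSeq_alternatingWord, List.getD_eq_getElem _ _ (by simpa using hk)]
  simp

end CoxeterSystem

theorem leftInvSeq_alternatingWord_symm_general {B W : Type*} [Group W] {M : CoxeterMatrix B}
    (cs : CoxeterSystem M W) (i j : B) :
    ∀ n, 1 ≤ n → n ≤ M i j →
      (cs.leftInvSeq (CoxeterSystem.alternatingWord i j (M i j))).getD (n - 1) 1 =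
      (cs.leftInvSeq (CoxeterSystem.alternatingWord j i (M i j))).getD (M i j - n) 1 := by
  intro n hn₁ hn₂
  rw [cs.getD_leftInvSeq_eq_conj, cs.getD_leftInvSeq_eq_conj,
    cs.getD_rightInvSeq_alternatingWord i j (by omega),
    cs.getD_rightInvSeq_alternatingWord j i (by omega)]
  have hbraid := cs.wordProd_braidWord_eq i j
  rw [CoxeterSystem.braidWord, CoxeterSystem.braidWord, M.symmetric j i] at hbraid
  rw [hbraid, cs.prod_alternatingWord_eq_prod_alternatingWord_sub i j _ (by omega)]
  congr 4
  omega

/-- Let `i ≠ j` with `m = M i j` finite, and let `u`, `v` be the two alternating words of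
length `m` in `s_i, s_j` (one starting with each letter).  Then for `1 ≤ n ≤ m`, the `n`-th
reflection of `u` equals the `(m - n + 1)`-st reflection of `v`. -/
theorem leftInvSeq_alternatingWord_symm {B W : Type*} [Group W] {M : CoxeterMatrix B}
    (cs : CoxeterSystem M W) (i j : B) (hij : i ≠ j) (hfin : M i j ≠ 0) :
    ∀ n, 1 ≤ n → n ≤ M i j →
      (cs.leftInvSeq (CoxeterSystem.alternatingWord i j (M i j))).getD (n - 1) 1 =
      (cs.leftInvSeq (CoxeterSystem.alternatingWord j i (M i j))).getD (M i j - n) 1 :=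
  leftInvSeq_alternatingWord_symm_general cs i j
end

section
/- Let (W,S) be a Coxeter system, X ⊆ S, s ∈ S, and w ∈ W an element that is (X,∅)-reduced. If w·s·w⁻¹ ∈ W_X, then w is also of minimal length in the double coset W_X·w·⟨s⟩, i.e. w is (X,{s})-reduced; in particular ℓ(w·s) = ℓ(w) + 1. -/
/-- The standard parabolic subgroup of a Coxeter system generated by the simple reflections
indexed by `X`. -/
def CoxeterSystem.standardParabolic {B W : Type*} [Group W] {M : CoxeterMatrix B}
    (cs : CoxeterSystem M W) (X : Set B) : Subgroup W :=
  Subgroup.closure (cs.simple '' X)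

/-- If `w` is `(X,∅)`-reduced and `w·s·w⁻¹ ∈ W_X`, then `w` is of minimal length in the
double coset `W_X·w·⟨s⟩`, i.e. `w` is `(X,{s})`-reduced; in particular `ℓ(ws) = ℓ(w) + 1`. -/
theorem min_doubleCoset_of_conj_simple_mem {B W : Type*} [Group W] {M : CoxeterMatrix B}
    (cs : CoxeterSystem M W) (X : Set B) (i : B) (w : W)
    (hw : ∀ x ∈ cs.standardParabolic X, cs.length (x * w) = cs.length x + cs.length w)
    (h : w * cs.simple i * w⁻¹ ∈ cs.standardParabolic X) :
    (∀ x ∈ cs.standardParabolic X, ∀ y ∈ Subgroup.zpowers (cs.simple i),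
      cs.length w ≤ cs.length (x * w * y)) ∧
    cs.length (w * cs.simple i) = cs.length w + 1 := by
  set t := w * cs.simple i * w⁻¹ with ht
  have htw : t * w = w * cs.simple i := by rw [ht]; group
  have hs1 : cs.simple i ≠ 1 := by
    intro h1
    have := cs.length_simple i
    rw [h1, cs.length_one] at this
    exact absurd this (by norm_num)
  have ht1 : t ≠ 1 := by
    intro h1
    apply hs1
    have : w * cs.simple i * w⁻¹ = 1 := h1
    have := congrArg (fun z => w⁻¹ * z * w) this
    simpa [mul_assoc] using this
  have hlt : cs.length t ≥ 1 := by
    rcases Nat.eq_zero_or_pos (cs.length t) with h0 | h0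
    · exact absurd (cs.length_eq_zero_iff.mp h0) ht1
    · exact h0
  have hws : cs.length (w * cs.simple i) = cs.length t + cs.length w := by
    rw [← htw]; exact hw t h
  have hle : cs.length (w * cs.simple i) ≤ cs.length w + 1 := by
    calc cs.length (w * cs.simple i) ≤ cs.length w + cs.length (cs.simple i) :=
          cs.length_mul_le w (cs.simple i)
      _ = cs.length w + 1 := by rw [cs.length_simple]
  have htlen : cs.length t = 1 := by omega
  have hmain : cs.length (w * cs.simple i) = cs.length w + 1 := by omega
  refine ⟨?_, hmain⟩
  intro x hx y hy
  obtain ⟨k, hk⟩ := hy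
  have hy2 : y = 1 ∨ y = cs.simple i := by
    rcases Int.even_or_odd k with ⟨m, hm⟩ | ⟨m, hm⟩
    · left
      rw [← hk, hm]
      show cs.simple i ^ (m + m) = 1
      rw [← two_mul, zpow_mul, show ((2:ℤ)) = ((2:ℕ):ℤ) by norm_num,
        zpow_natCast, cs.simple_sq, one_zpow]
    · right
      rw [← hk, hm]
      show cs.simple i ^ (2 * m + 1) = cs.simple i
      rw [zpow_add, zpow_mul, show ((2:ℤ)) = ((2:ℕ):ℤ) by norm_num,
        zpow_natCast, cs.simple_sq, one_zpow, one_mul, zpow_one]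
  rcases hy2 with rfl | rfl
  · rw [mul_one, hw x hx]; omega
  · have hrw : x * w * cs.simple i = (x * t) * w := by rw [ht]; group
    rw [hrw, hw (x * t) (mul_mem hx h)]
    omega
end

section
/- Let (W,S) be a Coxeter system, X ⊆ S, and i, j distinct indices in S. For any w ∈ W, exactly one of the following holds: (1) w·W_{{i,j}}·w⁻¹ ∩ W_X is trivial; (2) w·W_{{i,j}}·w⁻¹ ⊆ W_X; or (3) w·W_{{i,j}}·w⁻¹ ∩ W_X contains exactly one nontrivial element. -/
theorem List.even_count_of_getElem_add_eq {α : Type*} [BEq α] (L : List α) (p : ℕ)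
    (hL : L.length = 2 * p) (h : ∀ k (hk : k < p), L[k + p] = L[k]) (a : α) :
    Even (L.count a) := by
  have hdrop : L.drop p = L.take p := by
    refine List.ext_getElem (by simp; omega) fun k h₁ h₂ => ?_
    simpa [Nat.add_comm] using h k (by simp at h₂; omega)
  rw [← L.take_append_drop p, hdrop, List.count_append]
  exact ⟨_, rfl⟩

namespace Subgroup

variable {G : Type*} [Group G]

theorem map_conj_mul (H : Subgroup G) (a b : G) :
    H.map (MulAut.conj (a * b)).toMonoidHom =
      (H.map (MulAut.conj b).toMonoidHom).map (MulAut.conj a).toMonoidHom := by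
  rw [map_map]
  congr 1
  ext
  simp [mul_assoc]

theorem map_conj_of_mem {H : Subgroup G} {g : G} (hg : g ∈ H) :
    H.map (MulAut.conj g).toMonoidHom = H :=
  mem_normalizer_iff_map_conj_eq.mp (le_normalizer hg)

theorem eq_bot_or_existsUnique_of_le_zpowers {H : Subgroup G} {g : G} (hg : g * g = 1)
    (hH : H ≤ zpowers g) : H = ⊥ ∨ ∃! a, a ∈ H ∧ a ≠ 1 := by
  have heq : ∀ a ∈ H, a ≠ 1 → a = g := by
    intro a ha ha₁
    obtain ⟨n, rfl⟩ := mem_zpowers_iff.mp (hH ha)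
    rw [zpow_eq_zpow_emod n (show g ^ (2 : ℤ) = 1 by rw [zpow_two, hg])] at ha₁ ⊢
    rcases Int.emod_two_eq_zero_or_one n with h | h <;> simp_all
  refine H.bot_or_exists_ne_one.imp_right fun ⟨a, ha, ha₁⟩ => ⟨a, ⟨ha, ha₁⟩, ?_⟩
  exact fun b ⟨hb, hb₁⟩ => (heq b hb hb₁).trans (heq a ha ha₁).symm

end Subgroup

namespace CoxeterSystem

variable {B W : Type*} [Group W] {M : CoxeterMatrix B} (cs : CoxeterSystem M W)

local prefix:100 "s" => cs.simple
local prefix:100 "π" => cs.wordProd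
local prefix:100 "ℓ" => cs.length
local prefix:100 "ris " => cs.rightInvSeq
local prefix:100 "lis " => cs.leftInvSeq

open scoped Classical

theorem leftInvSeq_eq_map_conj_rightInvSeq (ω : List B) :
    lis ω = (ris ω).map (MulAut.conj (π ω)) := by
  induction ω with
  | nil => rfl
  | cons i ω ih =>
    simp only [leftInvSeq, rightInvSeq, ih, List.map_map, List.map_cons, wordProd_cons,
      List.cons.injEq]
    refine ⟨by simp [mul_assoc], List.map_congr_left fun t _ => ?_⟩
    simp [mul_assoc]

theorem leftInvSeq_append (ω₁ ω₂ : List B) :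
    lis (ω₁ ++ ω₂) = lis ω₁ ++ (lis ω₂).map (MulAut.conj (π ω₁)) := by
  induction ω₁ with
  | nil => simp
  | cons i ω ih =>
    simp only [List.cons_append, leftInvSeq, ih, List.map_append, List.map_map, wordProd_cons]
    congr 2
    exact List.map_congr_left fun t _ => by simp [mul_assoc]

theorem even_count_rightInvSeq_alternatingWord (i j : B) (t : W) :
    Even ((ris (alternatingWord i j (2 * M i j))).count t) := by
  -- The word has product `1`, so its right and left inversion sequences agree, and the latter
  -- has period `M i j`.
  have hπ : π (alternatingWord i j (2 * M i j)) = 1 := by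
    simp [prod_alternatingWord_eq_mul_pow, simple_mul_simple_pow]
  rw [← List.count_map_of_injective _ _ (MulAut.conj (1 : W)).injective,
    ← hπ, ← leftInvSeq_eq_map_conj_rightInvSeq, hπ, map_one, MulAut.one_apply]
  refine List.even_count_of_getElem_add_eq _ (M i j) (by simp) (fun k hk => ?_) t
  rw [getElem_leftInvSeq_alternatingWord _ _ _ _ _ (by omega),
    getElem_leftInvSeq_alternatingWord _ _ _ _ _ (by omega)]
  have hdiv (n : ℕ) : (2 * n + 1) / 2 = n := by omega
  simp [prod_alternatingWord_eq_mul_pow, hdiv, pow_add]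

noncomputable def signToss (i : B) : Equiv.Perm (W × ℤˣ) :=
  Function.Involutive.toPerm (fun p => (s i * p.1 * s i, if p.1 = s i then -p.2 else p.2))
    fun ⟨t, ε⟩ => by
      by_cases ht : t = s i
      · simp [ht]
      · have : t * s i ≠ 1 := fun h => ht (by rw [mul_eq_one_iff_eq_inv.mp h, inv_simple])
        simp [ht, this, mul_assoc]

theorem signToss_apply (i : B) (p : W × ℤˣ) :
    cs.signToss i p = (s i * p.1 * s i, if p.1 = s i then -p.2 else p.2) := rfl

theorem prod_map_signToss_apply (ω : List B) (t : W) (ε : ℤˣ) :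
    (ω.map cs.signToss).prod (t, ε) =
      (π ω * t * (π ω)⁻¹, (-1) ^ (ris ω).count t * ε) := by
  induction ω with
  | nil => simp
  | cons i ω ih =>
    rw [List.map_cons, List.prod_cons, Equiv.Perm.mul_apply, ih, signToss_apply]
    have hiff : π ω * t * (π ω)⁻¹ = s i ↔ (π ω)⁻¹ * s i * π ω = t := by
      constructor <;> intro h <;> rw [← h] <;> group
    refine Prod.ext (by simp [wordProd_cons, mul_assoc]) ?_
    by_cases h : (π ω)⁻¹ * s i * π ω = t <;> simp [rightInvSeq, hiff, h, pow_succ]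

theorem isLiftable_signToss : M.IsLiftable cs.signToss := by
  have hpow (i j : B) (m : ℕ) : (cs.signToss i * cs.signToss j) ^ m =
      ((alternatingWord i j (2 * m)).map cs.signToss).prod := by
    induction m with
    | zero => rfl
    | succ m ih =>
      rw [pow_succ', ih, Nat.mul_succ, alternatingWord_succ', alternatingWord_succ']
      simp [mul_assoc]
  intro i j
  ext ⟨t, ε⟩ <;> simp [hpow, prod_map_signToss_apply, prod_alternatingWord_eq_mul_pow,
    (cs.even_count_rightInvSeq_alternatingWord i j t).neg_one_pow]

noncomputable def signRep : W →* Equiv.Perm (W × ℤˣ) :=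
  cs.lift ⟨cs.signToss, cs.isLiftable_signToss⟩

-- `(-1)` to the number of occurrences of `t` in the right inversion sequence of any word for `w`
-- (`inversionSign_wordProd`); independence of the word is the liftability of `signToss`.
noncomputable def inversionSign (w t : W) : ℤˣ := (cs.signRep w (t, 1)).2

theorem signRep_wordProd (ω : List B) : cs.signRep (π ω) = (ω.map cs.signToss).prod := by
  simp [signRep, wordProd, map_list_prod, List.map_map, Function.comp_def]

theorem inversionSign_wordProd (ω : List B) (t : W) :
    cs.inversionSign (π ω) t = (-1) ^ (ris ω).count t := by
  simp [inversionSign, signRep_wordProd, prod_map_signToss_apply]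

theorem signRep_apply (w t : W) (ε : ℤˣ) :
    cs.signRep w (t, ε) = (w * t * w⁻¹, cs.inversionSign w t * ε) := by
  obtain ⟨ω, rfl⟩ := cs.wordProd_surjective w
  simp [signRep_wordProd, prod_map_signToss_apply, inversionSign_wordProd]

theorem inversionSign_mul (x y t : W) :
    cs.inversionSign (x * y) t = cs.inversionSign x (y * t * y⁻¹) * cs.inversionSign y t := by
  have h := congrArg Prod.snd (DFunLike.congr_fun (map_mul cs.signRep x y) (t, 1))
  rwa [Equiv.Perm.mul_apply, signRep_apply, signRep_apply, signRep_apply, mul_one, mul_one] at h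

theorem inversionSign_self {t : W} (ht : cs.IsReflection t) : cs.inversionSign t t = -1 := by
  obtain ⟨u, i, rfl⟩ := ht
  have e₁ : u⁻¹ * (u * s i * u⁻¹) * u⁻¹⁻¹ = s i := by group
  have e₂ : s i * s i * (s i)⁻¹ = s i := by group
  have hone : cs.inversionSign 1 (u * s i * u⁻¹) = 1 := by
    simpa using cs.inversionSign_wordProd [] (u * s i * u⁻¹)
  have hsimple : cs.inversionSign (s i) (s i) = -1 := by
    simpa using cs.inversionSign_wordProd [i] (s i)
  have h₁ := cs.inversionSign_mul u u⁻¹ (u * s i * u⁻¹)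
  rw [mul_inv_cancel, hone, e₁] at h₁
  rw [inversionSign_mul, e₁, inversionSign_mul, e₂, hsimple, mul_neg_one, neg_mul, ← h₁]

theorem inversionSign_eq_neg_one_of_isRightInversion {w t : W} (h : cs.IsRightInversion w t) :
    cs.inversionSign w t = -1 := by
  refine (Int.units_eq_one_or _).resolve_left fun hw => ?_
  obtain ⟨ω, hω, hwt⟩ := cs.exists_isReduced (w * t)
  have hsign : cs.inversionSign (w * t) t = -1 := by
    rw [inversionSign_mul, mul_inv_cancel_right, inversionSign_self cs h.1, hw,
      mul_neg_one]
  rw [hwt, inversionSign_wordProd] at hsign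
  have hmem : t ∈ ris ω :=
    List.count_pos_iff.mp (Nat.pos_of_ne_zero fun h0 => by simp [h0] at hsign)
  have := (cs.isRightInversion_of_mem_rightInvSeq hω hmem).2
  rw [← hwt, mul_assoc, h.1.mul_self, mul_one] at this
  exact absurd h.2 (not_lt.mpr this.le)

theorem mem_rightInvSeq_of_isRightInversion {ω : List B} {t : W}
    (h : cs.IsRightInversion (π ω) t) : t ∈ ris ω := by
  have hsign := cs.inversionSign_eq_neg_one_of_isRightInversion h
  rw [inversionSign_wordProd] at hsign
  exact List.count_pos_iff.mp (Nat.pos_of_ne_zero fun h0 => by simp [h0] at hsign)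

theorem mem_leftInvSeq_of_isLeftInversion {ω : List B} {t : W}
    (h : cs.IsLeftInversion (π ω) t) : t ∈ lis ω := by
  rw [← cs.isRightInversion_inv_iff, ← wordProd_reverse] at h
  simpa [rightInvSeq_reverse] using cs.mem_rightInvSeq_of_isRightInversion h

theorem exists_wordProd_eraseIdx_of_isLeftInversion {ω : List B} {t : W}
    (h : cs.IsLeftInversion (π ω) t) : ∃ k < ω.length, t * π ω = π (ω.eraseIdx k) := by
  obtain ⟨k, hk, rfl⟩ := List.getElem_of_mem (cs.mem_leftInvSeq_of_isLeftInversion h)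
  refine ⟨k, by simpa using hk, ?_⟩
  rw [← getD_leftInvSeq_mul_wordProd, List.getD_eq_getElem]

theorem mem_leftInvSeq_or_of_isLeftInversion_mul {ω₁ ω₂ : List B} {t : W}
    (h : cs.IsLeftInversion (π ω₁ * π ω₂) t) :
    t ∈ lis ω₁ ∨ (π ω₁)⁻¹ * t * π ω₁ ∈ lis ω₂ := by
  rw [← wordProd_append] at h
  have := cs.mem_leftInvSeq_of_isLeftInversion h
  rw [leftInvSeq_append, List.mem_append, List.mem_map] at this
  refine this.imp_right fun ⟨t', ht', hconj⟩ => ?_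
  rw [← hconj]
  simpa [mul_assoc] using ht'

theorem exists_isReduced_sublist (ω : List B) :
    ∃ ω' : List B, ω'.Sublist ω ∧ cs.IsReduced ω' ∧ π ω' = π ω := by
  induction ω with
  | nil => exact ⟨[], List.Sublist.slnil, by simp [IsReduced], rfl⟩
  | cons i ω ih =>
    obtain ⟨ω', hsub, hred, hπ⟩ := ih
    rcases cs.length_simple_mul (π ω') i with hlen | hlen
    · refine ⟨i :: ω', hsub.cons_cons i, ?_, by rw [wordProd_cons, wordProd_cons, hπ]⟩
      rw [IsReduced, wordProd_cons, hlen, hred, List.length_cons]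
    · have hinv : cs.IsLeftInversion (π ω') (s i) :=
        (cs.isLeftInversion_simple_iff_isLeftDescent _ i).mpr (by simp [IsLeftDescent]; omega)
      obtain ⟨k, hk, herase⟩ := cs.exists_wordProd_eraseIdx_of_isLeftInversion hinv
      refine ⟨ω'.eraseIdx k, ((ω'.eraseIdx_sublist k).trans hsub).cons i, ?_, ?_⟩
      · rw [IsReduced, ← herase, List.length_eraseIdx_of_lt hk, ← hred]
        omega
      · rw [← herase, hπ, wordProd_cons]

theorem simple_mem_standardParabolic {X : Set B} {x : B} (hx : x ∈ X) :
    s x ∈ cs.standardParabolic X :=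
  Subgroup.subset_closure ⟨x, hx, rfl⟩

theorem wordProd_mem_standardParabolic {X : Set B} {ω : List B} (h : ∀ b ∈ ω, b ∈ X) :
    π ω ∈ cs.standardParabolic X :=
  Subgroup.list_prod_mem _ fun _ hx => by
    obtain ⟨b, hb, rfl⟩ := List.mem_map.mp hx
    exact cs.simple_mem_standardParabolic (h b hb)

theorem exists_wordProd_of_mem_standardParabolic {X : Set B} {w : W}
    (hw : w ∈ cs.standardParabolic X) : ∃ ω : List B, (∀ b ∈ ω, b ∈ X) ∧ π ω = w := by
  induction hw using Subgroup.closure_induction with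
  | mem _ hx =>
    obtain ⟨b, hb, rfl⟩ := hx
    exact ⟨[b], by simpa using hb, wordProd_singleton _ _⟩
  | one => exact ⟨[], by simp, wordProd_nil _⟩
  | mul _ _ _ _ ih₁ ih₂ =>
    obtain ⟨ω₁, h₁, rfl⟩ := ih₁
    obtain ⟨ω₂, h₂, rfl⟩ := ih₂
    exact ⟨ω₁ ++ ω₂, by simpa using fun b => Or.rec (h₁ b) (h₂ b), wordProd_append _ _ _⟩
  | inv _ _ ih =>
    obtain ⟨ω, h, rfl⟩ := ih
    exact ⟨ω.reverse, by simpa using h, wordProd_reverse _ _⟩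

theorem exists_isReduced_of_mem_standardParabolic {X : Set B} {w : W}
    (hw : w ∈ cs.standardParabolic X) :
    ∃ ω : List B, (∀ b ∈ ω, b ∈ X) ∧ cs.IsReduced ω ∧ π ω = w := by
  obtain ⟨ω, hX, rfl⟩ := cs.exists_wordProd_of_mem_standardParabolic hw
  obtain ⟨ω', hsub, hred, hπ⟩ := cs.exists_isReduced_sublist ω
  exact ⟨ω', fun b hb => hX b (hsub.subset hb), hred, hπ⟩

theorem leftInvSeq_subset_standardParabolic {X : Set B} {ω : List B} (h : ∀ b ∈ ω, b ∈ X) :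
    ∀ t ∈ lis ω, t ∈ cs.standardParabolic X := by
  intro t ht
  obtain ⟨k, hk, rfl⟩ := List.getElem_of_mem ht
  have hk' : k < ω.length := by simpa using hk
  rw [getElem_leftInvSeq _ _ _ hk']
  have hπ := cs.wordProd_mem_standardParabolic fun b hb => h b ((ω.take_sublist k).subset hb)
  exact mul_mem (mul_mem hπ (cs.simple_mem_standardParabolic (h _ (List.getElem_mem hk'))))
    (inv_mem hπ)

theorem exists_eq_simple_of_length_eq_one {X : Set B} {w : W} (hw : w ∈ cs.standardParabolic X)
    (h : ℓ w = 1) : ∃ x ∈ X, w = s x := by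
  obtain ⟨ω, hX, hred, rfl⟩ := cs.exists_isReduced_of_mem_standardParabolic hw
  match ω, hred.symm.trans h with
  | [x], _ => exact ⟨x, hX x (by simp), wordProd_singleton _ _⟩

theorem length_mul_eq_add_of_forall_le_length_mul {X : Set B} {d : W}
    (hd : ∀ u ∈ cs.standardParabolic X, ℓ d ≤ ℓ (u * d)) {u : W}
    (hu : u ∈ cs.standardParabolic X) : ℓ (u * d) = ℓ u + ℓ d := by
  obtain ⟨ω, hX, hred, rfl⟩ := cs.exists_isReduced_of_mem_standardParabolic hu
  obtain ⟨ωd, hωd, rfl⟩ := cs.exists_isReduced d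
  rw [hred]
  clear hu
  induction ω with
  | nil => simp
  | cons x ω ih =>
    have hred' : cs.IsReduced ω := by simpa using hred.drop 1
    have hωX : ∀ b ∈ ω, b ∈ X := fun b hb => hX b (List.mem_cons_of_mem x hb)
    have hlen : ℓ (s x * π ω) = ω.length + 1 := by rw [← wordProd_cons, hred, List.length_cons]
    rw [wordProd_cons, mul_assoc, List.length_cons]
    rcases cs.length_simple_mul (π ω * π ωd) x with h | h
    · rw [h, ih hωX hred']
      omega
    exfalso
    have hinv : cs.IsLeftInversion (π ω * π ωd) (s x) := ⟨cs.isReflection_simple x, by omega⟩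
    rcases cs.mem_leftInvSeq_or_of_isLeftInversion_mul hinv with h₁ | h₂
    · have := (cs.isLeftInversion_of_mem_leftInvSeq hred' h₁).2
      rw [hlen, hred'] at this
      omega
    · have hconj : (π ω)⁻¹ * s x * π ω ∈ cs.standardParabolic X := by
        have hπ := cs.wordProd_mem_standardParabolic hωX
        exact mul_mem (mul_mem (inv_mem hπ)
          (cs.simple_mem_standardParabolic (hX x List.mem_cons_self))) hπ
      exact absurd (hd _ hconj) (not_le.mpr (cs.isLeftInversion_of_mem_leftInvSeq hωd h₂).2)

theorem length_mul_eq_add_of_forall_le_length_mul' {Y : Set B} {d : W}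
    (hd : ∀ v ∈ cs.standardParabolic Y, ℓ d ≤ ℓ (d * v)) {v : W}
    (hv : v ∈ cs.standardParabolic Y) : ℓ (d * v) = ℓ d + ℓ v := by
  have hd' : ∀ u ∈ cs.standardParabolic Y, ℓ d⁻¹ ≤ ℓ (u * d⁻¹) := fun u hu => by
    simpa [← cs.length_inv (u * d⁻¹)] using hd u⁻¹ (inv_mem hu)
  have := cs.length_mul_eq_add_of_forall_le_length_mul hd' (inv_mem hv)
  rw [← mul_inv_rev, length_inv, length_inv, length_inv] at this
  omega

def IsMinimalInDoubleCoset (X Y : Set B) (d : W) : Prop :=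
  ∀ a ∈ cs.standardParabolic X, ∀ b ∈ cs.standardParabolic Y, ℓ d ≤ ℓ (a * d * b)

theorem exists_eq_mul_mul_isMinimalInDoubleCoset (X Y : Set B) (w : W) :
    ∃ a ∈ cs.standardParabolic X, ∃ d, cs.IsMinimalInDoubleCoset X Y d ∧
      ∃ b ∈ cs.standardParabolic Y, w = a * d * b := by
  obtain ⟨_, ⟨a, ha, b, hb, rfl⟩, hmin⟩ := (InvImage.wf cs.length wellFounded_lt).has_min
    {x | ∃ a ∈ cs.standardParabolic X, ∃ b ∈ cs.standardParabolic Y, x = a * w * b}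
    ⟨w, 1, one_mem _, 1, one_mem _, by simp⟩
  refine ⟨a⁻¹, inv_mem ha, _, fun a' ha' b' hb' => not_lt.mp (hmin _ ?_), b⁻¹, inv_mem hb,
    by group⟩
  exact ⟨a' * a, mul_mem ha' ha, b * b', mul_mem hb hb', by group⟩

theorem exists_conj_simple_eq_of_length_simple_mul_lt {X Y : Set B} {d : W}
    (hd : cs.IsMinimalInDoubleCoset X Y d) {x : B} (hx : x ∈ X) {u : W}
    (hu : u ∈ cs.standardParabolic X) (hxu : ℓ (s x * u) < ℓ u)
    (hv : d⁻¹ * u * d ∈ cs.standardParabolic Y) : ∃ y ∈ Y, d * s y * d⁻¹ = s x := by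
  have hdX : ∀ a ∈ cs.standardParabolic X, ℓ d ≤ ℓ (a * d) := fun a ha => by
    simpa using hd a ha 1 (one_mem _)
  have hdY : ∀ b ∈ cs.standardParabolic Y, ℓ d ≤ ℓ (d * b) := fun b hb => by
    simpa using hd 1 (one_mem _) b hb
  have hsx := cs.simple_mem_standardParabolic hx
  obtain ⟨ωd, hωd, hd_eq⟩ := cs.exists_isReduced d
  obtain ⟨ωv, hωv, hv_eq⟩ := cs.exists_wordProd_of_mem_standardParabolic hv
  have hinv : cs.IsLeftInversion (π ωd * π ωv) (s x) := by
    refine ⟨cs.isReflection_simple x, ?_⟩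
    rw [← hd_eq, hv_eq, show d * (d⁻¹ * u * d) = u * d by group, ← mul_assoc,
      cs.length_mul_eq_add_of_forall_le_length_mul hdX (mul_mem hsx hu),
      cs.length_mul_eq_add_of_forall_le_length_mul hdX hu]
    omega
  -- `s x` cannot be a left inversion of `d` by minimality, so `d⁻¹ s x d` is a reflection of
  -- `W_Y`, of length one by additivity of lengths.
  rcases cs.mem_leftInvSeq_or_of_isLeftInversion_mul hinv with h₁ | h₂
  · have := (cs.isLeftInversion_of_mem_leftInvSeq hωd h₁).2
    rw [← hd_eq] at this
    exact absurd (hdX _ hsx) (not_le.mpr this)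
  rw [← hd_eq] at h₂
  have htY := cs.leftInvSeq_subset_standardParabolic hωv _ h₂
  have ht₁ : d⁻¹ * s x * d ≠ 1 := fun h => by
    have : s x = 1 := by rw [show s x = d * (d⁻¹ * s x * d) * d⁻¹ by group, h]; group
    simpa [cs.length_simple] using congrArg cs.length this
  have hlen : ℓ (d⁻¹ * s x * d) = 1 := by
    have hadd := cs.length_mul_eq_add_of_forall_le_length_mul' hdY htY
    rw [show d * (d⁻¹ * s x * d) = s x * d by group] at hadd
    have := cs.length_mul_le (s x) d
    rw [cs.length_simple] at this
    have := mt cs.length_eq_zero_iff.mp ht₁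
    omega
  obtain ⟨y, hy, hty⟩ := cs.exists_eq_simple_of_length_eq_one htY hlen
  exact ⟨y, hy, by rw [← hty]; group⟩

theorem standardParabolic_inf_map_conj_le {X Y : Set B} {d : W}
    (hd : cs.IsMinimalInDoubleCoset X Y d) :
    cs.standardParabolic X ⊓ (cs.standardParabolic Y).map (MulAut.conj d).toMonoidHom ≤
      cs.standardParabolic {x ∈ X | ∃ y ∈ Y, d * s y * d⁻¹ = s x} := by
  intro u hu
  rw [Subgroup.mem_inf, Subgroup.mem_map_equiv, MulAut.conj_symm_apply] at hu
  obtain ⟨hu, hv⟩ := hu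
  obtain ⟨ω, hX, hred, rfl⟩ := cs.exists_isReduced_of_mem_standardParabolic hu
  clear hu
  induction ω with
  | nil => exact one_mem _
  | cons x ω ih =>
    have hred' : cs.IsReduced ω := by simpa using hred.drop 1
    have hωX : ∀ b ∈ ω, b ∈ X := fun b hb => hX b (List.mem_cons_of_mem x hb)
    have hxX := hX x List.mem_cons_self
    have hxu : ℓ (s x * π (x :: ω)) < ℓ (π (x :: ω)) := by
      rw [wordProd_cons, simple_mul_simple_cancel_left, ← wordProd_cons, hred, hred',
        List.length_cons]
      omega
    obtain ⟨y, hy, hxy⟩ := cs.exists_conj_simple_eq_of_length_simple_mul_lt hd hxX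
      (cs.wordProd_mem_standardParabolic hX) hxu hv
    have hv' : d⁻¹ * π ω * d ∈ cs.standardParabolic Y := by
      rw [show d⁻¹ * π ω * d = s y * (d⁻¹ * π (x :: ω) * d) by rw [wordProd_cons, ← hxy]; simp [mul_assoc]]
      exact mul_mem (cs.simple_mem_standardParabolic hy) hv
    rw [wordProd_cons]
    exact mul_mem (cs.simple_mem_standardParabolic ⟨hxX, y, hy, hxy⟩) (ih hωX hred' hv')

theorem map_conj_le_or_exists_inf_le_zpowers {X : Set B} {i j : B} {d : W}
    (hd : cs.IsMinimalInDoubleCoset X {i, j} d) :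
    (cs.standardParabolic {i, j}).map (MulAut.conj d).toMonoidHom ≤ cs.standardParabolic X ∨
      ∃ g : W, g * g = 1 ∧ (cs.standardParabolic {i, j}).map (MulAut.conj d).toMonoidHom ⊓
        cs.standardParabolic X ≤ Subgroup.zpowers g := by
  by_cases h : d * s i * d⁻¹ ∈ cs.standardParabolic X ∧ d * s j * d⁻¹ ∈ cs.standardParabolic X
  · left
    rw [standardParabolic, MonoidHom.map_closure, Subgroup.closure_le]
    rintro _ ⟨_, ⟨y, hy | hy, rfl⟩, rfl⟩
    exacts [hy ▸ h.1, hy ▸ h.2]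
  right
  obtain ⟨y₀, hy₀⟩ : ∃ y₀, ∀ y ∈ ({i, j} : Set B), d * s y * d⁻¹ ∈ cs.standardParabolic X →
      y = y₀ := by
    by_cases hi : d * s i * d⁻¹ ∈ cs.standardParabolic X
    · exact ⟨i, fun y hy hyX => hy.resolve_right fun hj => h ⟨hi, hj ▸ hyX⟩⟩
    · exact ⟨j, fun y hy hyX => hy.resolve_left fun hi' => hi (hi' ▸ hyX)⟩
  refine ⟨d * s y₀ * d⁻¹, by simp [mul_assoc], ?_⟩
  rw [inf_comm]
  refine (cs.standardParabolic_inf_map_conj_le hd).trans ?_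
  rw [standardParabolic, Subgroup.closure_le]
  rintro _ ⟨x, ⟨hx, y, hy, hxy⟩, rfl⟩
  rw [← hxy, hy₀ y hy (hxy ▸ cs.simple_mem_standardParabolic hx)]
  exact Subgroup.mem_zpowers _

end CoxeterSystem

theorem conj_dihedral_inter_parabolic_trichotomy_general {B W : Type*} [Group W] {M : CoxeterMatrix B}
    (cs : CoxeterSystem M W) (X : Set B) (i j : B) (w : W) :
    (cs.standardParabolic {i, j}).map (MulAut.conj w).toMonoidHom ⊓ cs.standardParabolic X = ⊥ ∨
    (cs.standardParabolic {i, j}).map (MulAut.conj w).toMonoidHom ≤ cs.standardParabolic X ∨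
    (∃! a : W, a ∈ (cs.standardParabolic {i, j}).map (MulAut.conj w).toMonoidHom ⊓
      cs.standardParabolic X ∧ a ≠ 1) := by
  obtain ⟨a, ha, d, hd, b, hb, rfl⟩ := cs.exists_eq_mul_mul_isMinimalInDoubleCoset X {i, j} w
  rw [Subgroup.map_conj_mul, Subgroup.map_conj_of_mem hb, Subgroup.map_conj_mul]
  rcases cs.map_conj_le_or_exists_inf_le_zpowers hd with hle | ⟨g, hg, hle⟩
  · exact Or.inr (Or.inl ((Subgroup.map_mono hle).trans (Subgroup.map_conj_of_mem ha).le))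
  have hle' : ((cs.standardParabolic {i, j}).map (MulAut.conj d).toMonoidHom).map
      (MulAut.conj a).toMonoidHom ⊓ cs.standardParabolic X ≤ Subgroup.zpowers (a * g * a⁻¹) :=
    calc _ = (((cs.standardParabolic {i, j}).map (MulAut.conj d).toMonoidHom) ⊓
            cs.standardParabolic X).map (MulAut.conj a).toMonoidHom := by
          rw [Subgroup.map_inf_eq _ _ _ (MulAut.conj a).injective, Subgroup.map_conj_of_mem ha]
      _ ≤ (Subgroup.zpowers g).map (MulAut.conj a).toMonoidHom := Subgroup.map_mono hle
      _ = Subgroup.zpowers (a * g * a⁻¹) := MonoidHom.map_zpowers _ _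
  have hg' : a * g * a⁻¹ * (a * g * a⁻¹) = 1 := by
    rw [show a * g * a⁻¹ * (a * g * a⁻¹) = a * (g * g) * a⁻¹ by group, hg, mul_one, mul_inv_cancel]
  rcases Subgroup.eq_bot_or_existsUnique_of_le_zpowers hg' hle' with h | h
  exacts [Or.inl h, Or.inr (Or.inr h)]

/-- For distinct `i, j` and any `w ∈ W`, there are only three possibilities:
`w·W_{{i,j}}·w⁻¹ ∩ W_X` is trivial, or `w·W_{{i,j}}·w⁻¹ ⊆ W_X`, or
`w·W_{{i,j}}·w⁻¹ ∩ W_X` contains exactly one nontrivial element. -/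
theorem conj_dihedral_inter_parabolic_trichotomy {B W : Type*} [Group W] {M : CoxeterMatrix B}
    (cs : CoxeterSystem M W) (X : Set B) (i j : B) (hij : i ≠ j) (w : W) :
    (cs.standardParabolic {i, j}).map (MulAut.conj w).toMonoidHom ⊓ cs.standardParabolic X = ⊥ ∨
    (cs.standardParabolic {i, j}).map (MulAut.conj w).toMonoidHom ≤ cs.standardParabolic X ∨
    (∃! a : W, a ∈ (cs.standardParabolic {i, j}).map (MulAut.conj w).toMonoidHom ⊓
      cs.standardParabolic X ∧ a ≠ 1) :=
  conj_dihedral_inter_parabolic_trichotomy_general cs X i j w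
end
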